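/- arXiv:1603.04021 — 3 statements merged into one kernel-verified Lean document; each statement's English description precedes it below -/
import Mathlib

section
/- Let R be a commutative ring of characteristic 2, and let v, y₁, y₂ ∈ R satisfy v² = v·y₁ + y₂. Then for every m ≥ 1, v^(2^m) = v·y₁^(2^m − 1) + ∑_{i=1}^{m} y₁^(2^m − 2^i)·y₂^(2^(i−1)). -/
/-!
Raising to a power of 2 is additive in characteristic 2, so
`v ^ 2 ^ (m + 1) = (v * y₁ + y₂) ^ 2 ^ m = v ^ 2 ^ m * y₁ ^ 2 ^ m + y₂ ^ 2 ^ m`.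
Substituting the formula for `v ^ 2 ^ m` multiplies every summand by `y₁ ^ 2 ^ m`, and
`y₂ ^ 2 ^ m` is the new top summand `i = m + 1`.
-/

lemma add_pow_two_pow_of_two_eq_zero {R : Type*} [CommRing R] (h2 : (2 : R) = 0) (a b : R) :
    ∀ n : ℕ, (a + b) ^ 2 ^ n = a ^ 2 ^ n + b ^ 2 ^ n
  | 0 => by simp
  | n + 1 => by
    rw [pow_succ, pow_mul, pow_mul, pow_mul, add_pow_two_pow_of_two_eq_zero h2 a b n]
    linear_combination a ^ 2 ^ n * b ^ 2 ^ n * h2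

lemma pow_two_pow_sub_mul_pow_two_pow {M : Type*} [Monoid M] (x : M) {m k : ℕ} (hk : k ≤ 2 ^ m) :
    x ^ (2 ^ m - k) * x ^ 2 ^ m = x ^ (2 ^ (m + 1) - k) := by
  rw [← pow_add, pow_succ]
  congr 1
  omega

theorem stmt_0_general (R : Type*) [CommRing R] (h2 : (2 : R) = 0)
    (v y₁ y₂ : R) (h : v ^ 2 = v * y₁ + y₂) (m : ℕ) :
    v ^ (2 ^ m) =
      v * y₁ ^ (2 ^ m - 1) +
        ∑ i ∈ Finset.Icc 1 m, y₁ ^ (2 ^ m - 2 ^ i) * y₂ ^ (2 ^ (i - 1)) := by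
  induction m with
  | zero => simp
  | succ m ih =>
    calc v ^ 2 ^ (m + 1) = (v * y₁ + y₂) ^ 2 ^ m := by rw [pow_succ', pow_mul, h]
      _ = v ^ 2 ^ m * y₁ ^ 2 ^ m + y₂ ^ 2 ^ m := by
        rw [add_pow_two_pow_of_two_eq_zero h2, mul_pow]
      _ = v * (y₁ ^ (2 ^ m - 1) * y₁ ^ 2 ^ m) +
            (∑ i ∈ Finset.Icc 1 m, y₁ ^ (2 ^ m - 2 ^ i) * y₁ ^ 2 ^ m * y₂ ^ 2 ^ (i - 1) +
              y₂ ^ 2 ^ m) := by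
        rw [ih, add_mul, Finset.sum_mul, mul_assoc, add_assoc]
        congr 3
        exact funext fun _ => mul_right_comm _ _ _
      _ = _ := by
        rw [Finset.sum_Icc_succ_top (by omega), pow_two_pow_sub_mul_pow_two_pow _ Nat.one_le_two_pow]
        congr 2
        · exact Finset.sum_congr rfl fun i hi => by
            rw [pow_two_pow_sub_mul_pow_two_pow _
              (Nat.pow_le_pow_right two_pos (Finset.mem_Icc.mp hi).2)]
        · simp

theorem stmt_0 (R : Type*) [CommRing R] (h2 : (2 : R) = 0)
    (v y₁ y₂ : R) (h : v ^ 2 = v * y₁ + y₂) (m : ℕ) (hm : 1 ≤ m) :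
    v ^ (2 ^ m) =
      v * y₁ ^ (2 ^ m - 1) +
        ∑ i ∈ Finset.Icc 1 m, y₁ ^ (2 ^ m - 2 ^ i) * y₂ ^ (2 ^ (i - 1)) :=
  stmt_0_general R h2 v y₁ y₂ h m
end

section
/- Let s ≥ 2, n ≥ 1 and let R = F₂[u, v]/(u^(2^((n+1)s)), v^(2^((n+1)s))). Define the F₂-algebra endomorphism t of R by t(u) = u and t(v) = v + u^(2^(ns)) + (v·u^(2^(ns)))^(2^(s−1)). Then t is an involution: t(t(v)) = v in R. -/
/-! In characteristic two the Frobenius `x ↦ x ^ 2 ^ k` is additive, so with `b = a ^ 2 ^ k`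
a direct computation gives the polynomial identity
`t (t x) = x + b ^ 2 + (x ^ 2 ^ k) ^ 2 ^ k * b ^ (2 ^ k + 1)` for `t x = x + a + (x a) ^ 2 ^ k`.
For `a = u ^ 2 ^ (n s)` and `k = s - 1` the power `b ^ 2` is a power of `u` of exponent at least
`2 ^ ((n + 1) s)`, so both error terms vanish in `R`. -/

section Twist

variable {R S : Type*} [CommRing R] [CommRing S]

/-- The image of `v` under `t` is `twist (u ^ 2 ^ (n s)) (s - 1) v`. -/
def twist (a : R) (k : ℕ) (x : R) : R := x + a + (x * a) ^ 2 ^ k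

theorem map_twist (f : R →+* S) (a : R) (k : ℕ) (x : R) :
    f (twist a k x) = twist (f a) k (f x) := by
  simp only [twist, map_add, map_pow, map_mul]

theorem twist_twist [CharP R 2] (a : R) (k : ℕ) (x : R) :
    twist a k (twist a k x) =
      x + (a ^ 2 ^ k) ^ 2 + (x ^ 2 ^ k) ^ 2 ^ k * (a ^ 2 ^ k) ^ (2 ^ k + 1) := by
  have hfrob : twist a k x ^ 2 ^ k =
      x ^ 2 ^ k + a ^ 2 ^ k + (x ^ 2 ^ k) ^ 2 ^ k * (a ^ 2 ^ k) ^ 2 ^ k := by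
    simp only [twist, add_pow_char_pow, mul_pow]
  rw [twist, mul_pow, hfrob, twist, mul_pow]
  linear_combination (a + x ^ 2 ^ k * a ^ 2 ^ k) * CharTwo.two_eq_zero (R := R)

end Twist

theorem stmt_9_general (n s : ℕ) :
    let I : Ideal (MvPolynomial (Fin 2) (ZMod 2)) :=
      Ideal.span {(MvPolynomial.X 0 : MvPolynomial (Fin 2) (ZMod 2)) ^ (2 ^ ((n + 1) * s)),
        (MvPolynomial.X 1 : MvPolynomial (Fin 2) (ZMod 2)) ^ (2 ^ ((n + 1) * s))}
    let u : MvPolynomial (Fin 2) (ZMod 2) ⧸ I := Ideal.Quotient.mk I (MvPolynomial.X 0)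
    let v : MvPolynomial (Fin 2) (ZMod 2) ⧸ I := Ideal.Quotient.mk I (MvPolynomial.X 1)
    let tv := v + u ^ (2 ^ (n * s)) + (v * u ^ (2 ^ (n * s))) ^ (2 ^ (s - 1))
    tv + u ^ (2 ^ (n * s)) + (tv * u ^ (2 ^ (n * s))) ^ (2 ^ (s - 1)) = v := by
  intro I u v tv
  have hu : u ^ 2 ^ ((n + 1) * s) = 0 := by
    rw [← map_pow, Ideal.Quotient.eq_zero_iff_mem]
    exact Ideal.subset_span (Set.mem_insert _ _)
  have hsq : ((u ^ 2 ^ (n * s)) ^ 2 ^ (s - 1)) ^ 2 = 0 := by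
    rw [← pow_mul, ← pow_mul, ← pow_succ, ← pow_add]
    exact pow_eq_zero_of_le (Nat.pow_le_pow_right two_pos (by rw [add_mul, one_mul]; omega)) hu
  have hsucc : ((u ^ 2 ^ (n * s)) ^ 2 ^ (s - 1)) ^ (2 ^ (s - 1) + 1) = 0 :=
    pow_eq_zero_of_le (Nat.succ_le_succ Nat.one_le_two_pow) hsq
  have key := congrArg (Ideal.Quotient.mk I)
    (twist_twist (MvPolynomial.X 0 ^ 2 ^ (n * s)) (s - 1) (MvPolynomial.X 1))
  simp only [map_twist, map_add, map_mul, map_pow] at key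
  change twist (u ^ 2 ^ (n * s)) (s - 1) (twist (u ^ 2 ^ (n * s)) (s - 1) v) = v
  rwa [hsq, hsucc, mul_zero, add_zero, add_zero] at key

theorem stmt_9 (n s : ℕ) (hn : 1 ≤ n) (hs : 2 ≤ s) :
    let I : Ideal (MvPolynomial (Fin 2) (ZMod 2)) :=
      Ideal.span {(MvPolynomial.X 0 : MvPolynomial (Fin 2) (ZMod 2)) ^ (2 ^ ((n + 1) * s)),
        (MvPolynomial.X 1 : MvPolynomial (Fin 2) (ZMod 2)) ^ (2 ^ ((n + 1) * s))}
    let u : MvPolynomial (Fin 2) (ZMod 2) ⧸ I := Ideal.Quotient.mk I (MvPolynomial.X 0)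
    let v : MvPolynomial (Fin 2) (ZMod 2) ⧸ I := Ideal.Quotient.mk I (MvPolynomial.X 1)
    let tv := v + u ^ (2 ^ (n * s)) + (v * u ^ (2 ^ (n * s))) ^ (2 ^ (s - 1))
    tv + u ^ (2 ^ (n * s)) + (tv * u ^ (2 ^ (n * s))) ^ (2 ^ (s - 1)) = v :=
  stmt_9_general n s
end

section
/- Let s ≥ 2, n ≥ 2 and R = F₂[u, v]/(u^(2^((n+1)s)), v^(2^((n+1)s))). Define t(u) = u + u^(2^(ns)) + u^((2^(ns)+1)·2^(s−1)) and set x̄₂ = u·t(u). Then x̄₂^(2^(ns−1)) = u^(2^(ns)) in R. -/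
/-!
Since `R` has characteristic two, raising to the power `2 ^ (n s - 1)` is additive, so
`(u² + u · (u^a + u^b)) ^ (2 ^ (n s - 1))` splits into `u ^ (2 ^ (n s))` and powers of `u` whose
exponents are at least `2 ^ (n s) · 2 ^ (n s - 1) ≥ 2 ^ ((n + 1) s)`, which vanish in `R`.
-/

section CharTwo

variable {R : Type*} [CommRing R] [CharP R 2]

theorem mul_add_pow_two_pow_of_mul_pow_eq_zero {u y : R} {k : ℕ} (h : (u * y) ^ 2 ^ k = 0) :
    (u * (u + y)) ^ 2 ^ k = u ^ 2 ^ (k + 1) := by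
  rw [mul_add, add_pow_char_pow, h, add_zero, ← sq, ← pow_mul, pow_succ']

theorem mul_pow_add_pow_pow_two_pow_eq_zero {u : R} {N k a b : ℕ} (hu : u ^ 2 ^ N = 0)
    (ha : 2 ^ N ≤ (a + 1) * 2 ^ k) (hb : 2 ^ N ≤ (b + 1) * 2 ^ k) :
    (u * (u ^ a + u ^ b)) ^ 2 ^ k = 0 := by
  rw [mul_add, add_pow_char_pow, ← pow_succ', ← pow_succ', ← pow_mul, ← pow_mul,
    pow_eq_zero_of_le ha hu, pow_eq_zero_of_le hb hu, add_zero]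

end CharTwo

theorem charP_two_of_algebra_zmod_two (A : Type*) [CommRing A] [Nontrivial A]
    [Algebra (ZMod 2) A] : CharP A 2 :=
  charP_of_injective_algebraMap (algebraMap (ZMod 2) A).injective 2

theorem stmt_13 (n s : ℕ) (hn : 2 ≤ n) (hs : 2 ≤ s) :
    let I : Ideal (MvPolynomial (Fin 2) (ZMod 2)) :=
      Ideal.span {(MvPolynomial.X 0 : MvPolynomial (Fin 2) (ZMod 2)) ^ (2 ^ ((n + 1) * s)),
        (MvPolynomial.X 1 : MvPolynomial (Fin 2) (ZMod 2)) ^ (2 ^ ((n + 1) * s))}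
    let u : MvPolynomial (Fin 2) (ZMod 2) ⧸ I := Ideal.Quotient.mk I (MvPolynomial.X 0)
    let tu := u + u ^ (2 ^ (n * s)) + u ^ ((2 ^ (n * s) + 1) * 2 ^ (s - 1))
    let x₂ := u * tu
    x₂ ^ (2 ^ (n * s - 1)) = u ^ (2 ^ (n * s)) := by
  intro I u tu x₂
  rcases subsingleton_or_nontrivial (MvPolynomial (Fin 2) (ZMod 2) ⧸ I) with _ | _
  · exact Subsingleton.elim _ _
  have := charP_two_of_algebra_zmod_two (MvPolynomial (Fin 2) (ZMod 2) ⧸ I)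
  have hu : u ^ 2 ^ ((n + 1) * s) = 0 := by
    rw [← map_pow, Ideal.Quotient.eq_zero_iff_mem]
    exact Ideal.subset_span (Set.mem_insert _ _)
  have hns : n * s - 1 + 1 = n * s := Nat.sub_add_cancel (by nlinarith)
  have ha : 2 ^ ((n + 1) * s) ≤ (2 ^ (n * s) + 1) * 2 ^ (n * s - 1) :=
    calc 2 ^ ((n + 1) * s) ≤ 2 ^ (n * s + (n * s - 1)) := Nat.pow_le_pow_right two_pos (by
            rw [add_mul, one_mul]; nlinarith)
      _ ≤ (2 ^ (n * s) + 1) * 2 ^ (n * s - 1) := by rw [pow_add]; gcongr; omega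
  have hb : 2 ^ ((n + 1) * s) ≤ ((2 ^ (n * s) + 1) * 2 ^ (s - 1) + 1) * 2 ^ (n * s - 1) :=
    ha.trans (Nat.mul_le_mul_right _ ((Nat.le_mul_of_pos_right _ (Nat.two_pow_pos _)).trans (Nat.le_succ _)))
  have key := mul_add_pow_two_pow_of_mul_pow_eq_zero
    (mul_pow_add_pow_pow_two_pow_eq_zero hu ha hb)
  rw [hns, ← add_assoc] at key
  exact key
end
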